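/- arXiv:1810.08688 — 2 statements merged into one kernel-verified Lean document; each statement's English description precedes it below -/
import Mathlib

section
/- With η* = √(2/3), the integral ∫ from η* to 0 of √(2ψ)/√(ψ + 2η*) dψ equals (2 log(2 + √3))/√3 − 2. -/
/-!
Writing `√(2ψ) = √2 · √ψ`, the integrand is `√2` times `√ψ / √(ψ + a)` with `a = 2η*`, which has the
elementary primitive `√(ψ(ψ + a)) - a log (√ψ + √(ψ + a))`. At the endpoints `ψ = η*` and `ψ = 0`
the logarithms differ by `log ((1 + √3) / √2) = log (2 + √3) / 2`, and `√2 · √3 · η* = 2`.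
-/

open Real intervalIntegral

noncomputable def sqrtRatioPrimitive (a x : ℝ) : ℝ :=
  √(x * (x + a)) - a * log (√x + √(x + a))

lemma hasDerivAt_sqrtRatioPrimitive {a x : ℝ} (ha : 0 ≤ a) (hx : 0 < x) :
    HasDerivAt (sqrtRatioPrimitive a) (√x / √(x + a)) x := by
  have hxa : 0 < x + a := by linarith
  have hu : 0 < √x := sqrt_pos.2 hx
  have hv : 0 < √(x + a) := sqrt_pos.2 hxa
  have hprod : HasDerivAt (fun y => √(y * (y + a))) ((2 * x + a) / (2 * √(x * (x + a)))) x := by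
    refine (((hasDerivAt_id x).fun_mul ((hasDerivAt_id x).add_const a)).sqrt
      (mul_pos hx hxa).ne').congr_deriv ?_
    simp only [id_eq]
    ring
  have hshift : HasDerivAt (fun y => √(y + a)) (1 / (2 * √(x + a))) x := by
    simpa using ((hasDerivAt_id x).add_const a).sqrt hxa.ne'
  have hlog : HasDerivAt (fun y => log (√y + √(y + a)))
      ((1 / (2 * √x) + 1 / (2 * √(x + a))) / (√x + √(x + a))) x :=
    ((hasDerivAt_sqrt hx.ne').fun_add hshift).log (by positivity)
  refine (hprod.sub (hlog.const_mul a)).congr_deriv ?_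
  have hu2 : √x ^ 2 = x := sq_sqrt hx.le
  have hv2 : √(x + a) ^ 2 = x + a := sq_sqrt hxa.le
  rw [sqrt_mul hx.le]
  field_simp
  nlinarith [hu2, hv2]

lemma continuousOn_sqrtRatioPrimitive {a : ℝ} (ha : 0 < a) :
    ContinuousOn (sqrtRatioPrimitive a) (Set.Ici 0) := by
  intro x hx
  have : 0 < √x + √(x + a) := by
    have : 0 < √(x + a) := sqrt_pos.2 (by simp at hx; linarith)
    positivity
  unfold sqrtRatioPrimitive
  fun_prop (disch := exact this.ne')

theorem integral_sqrt_div_sqrt_add {a b : ℝ} (ha : 0 < a) (hb : 0 ≤ b) :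
    ∫ x in 0..b, √x / √(x + a) = sqrtRatioPrimitive a b - sqrtRatioPrimitive a 0 := by
  refine integral_eq_sub_of_hasDerivAt_of_le hb
    ((continuousOn_sqrtRatioPrimitive ha).mono Set.Icc_subset_Ici_self)
    (fun x hx => hasDerivAt_sqrtRatioPrimitive ha.le hx.1) ?_
  refine (continuous_sqrt.continuousOn.div (by fun_prop) fun x hx => ?_).intervalIntegrable
  rw [Set.uIcc_of_le hb] at hx
  exact (sqrt_pos.2 (by linarith [hx.1])).ne'

lemma sqrt_two_add_sqrt_three : √(2 + √3) = (1 + √3) / √2 := by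
  rw [sqrt_eq_iff_mul_self_eq (by positivity) (by positivity)]
  field_simp
  rw [sq_sqrt zero_le_two]
  nlinarith [sq_sqrt (show (0:ℝ) ≤ 3 by norm_num)]

lemma sqrtRatioPrimitive_two_mul_sub {c : ℝ} (hc : 0 < c) :
    sqrtRatioPrimitive (2 * c) c - sqrtRatioPrimitive (2 * c) 0 = c * (√3 - log (2 + √3)) := by
  have h3 : √(c + 2 * c) = √3 * √c := by rw [← sqrt_mul (by norm_num)]; ring_nf
  have h2 : √(2 * c) = √2 * √c := sqrt_mul (by norm_num) c
  have hcc : √(c * (c + 2 * c)) = √3 * c := by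
    rw [show c * (c + 2 * c) = 3 * c ^ 2 by ring, sqrt_mul (by norm_num), sqrt_sq hc.le]
  have hlog : log (√c + √3 * √c) - log (√2 * √c) = log (2 + √3) / 2 := by
    rw [← log_div (by positivity) (by positivity), ← log_sqrt (by positivity), sqrt_two_add_sqrt_three]
    congr 1
    field_simp
  simp only [sqrtRatioPrimitive, zero_mul, zero_add, sqrt_zero, h3, h2, hcc]
  linear_combination (-2 * c) * hlog

/-- With `η* = √(2/3)`, `∫_{η*}^{0} √(2ψ)/√(ψ + 2η*) dψ = 2 log(2+√3)/√3 − 2`. -/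
theorem stmt_3 :
    let η : ℝ := Real.sqrt (2 / 3)
    (∫ ψ in η..(0 : ℝ), Real.sqrt (2 * ψ) / Real.sqrt (ψ + 2 * η)) =
      2 * Real.log (2 + Real.sqrt 3) / Real.sqrt 3 - 2 := by
  intro η
  have hη : 0 < η := sqrt_pos.2 (by norm_num)
  have h : √2 * √3 * η = 2 := by
    rw [← sqrt_mul zero_le_two, ← sqrt_mul (by positivity)]
    norm_num
  rw [integral_symm]
  simp_rw [sqrt_mul zero_le_two, mul_div_assoc]
  rw [integral_const_mul, integral_sqrt_div_sqrt_add (by positivity) hη.le,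
    sqrtRatioPrimitive_two_mul_sub hη]
  field_simp
  linear_combination (log (2 + √3) - √3) * h
end

section
/- Setting c = (1/3)√((2/3)(√7−1))(2+√7), there exist ν ∈ ℂ and λ ∈ iℝ with −ν⁴ − ν² + cν − λ = 0 and −4ν³ − 2ν + c = 0, i.e. the dispersion relation d(λ, ν) = −ν⁴ − ν² + cν − λ of the Cahn–Hilliard equation ψ_t = −(ψ_xx + ψ − ψ³)_xx + c_x ψ_x linearized at ψ = 0 admits at this c a double root with Re λ = 0. -/
open Real Complex

/-- Pinched double root for the Cahn–Hilliard dispersion relation: at the linear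
spreading speed `c_lin = (1/3)√((2/3)(√7−1))(2+√7)` there exist `ν ∈ ℂ` and purely
imaginary `λ` with `−ν⁴ − ν² + cν − λ = 0` and `−4ν³ − 2ν + c = 0`. -/
theorem stmt_6 :
    let c : ℝ := (1 / 3) * Real.sqrt ((2 / 3) * (Real.sqrt 7 - 1)) * (2 + Real.sqrt 7)
    ∃ (ν lam : ℂ), lam.re = 0 ∧
      -ν ^ 4 - ν ^ 2 + (c : ℂ) * ν - lam = 0 ∧
      -4 * ν ^ 3 - 2 * ν + (c : ℂ) = 0 := by
  intro c
  set s : ℝ := Real.sqrt 7 with hs_def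
  have hs1 : (1 : ℝ) ≤ s := by
    rw [hs_def, show (1:ℝ) = Real.sqrt 1 by simp]
    exact Real.sqrt_le_sqrt (by norm_num)
  have hs : s ^ 2 = 7 := Real.sq_sqrt (by norm_num)
  set q : ℝ := Real.sqrt ((s - 1) / 24) with hq_def
  set b : ℝ := Real.sqrt ((s + 3) / 8) with hb_def
  have hq : q ^ 2 = (s - 1) / 24 := Real.sq_sqrt (by linarith)
  have hb : b ^ 2 = (s + 3) / 8 := Real.sq_sqrt (by linarith)
  have hq0 : 0 ≤ q := Real.sqrt_nonneg _
  have hc : c = 4 * q * (2 + s) / 3 := by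
    have h4q : Real.sqrt ((2 / 3) * (s - 1)) = 4 * q := by
      rw [show (2 / 3 : ℝ) * (s - 1) = (4 * q) ^ 2 by rw [mul_pow, hq]; ring]
      exact Real.sqrt_sq (by positivity)
    simp only [c, hs_def] at *
    rw [h4q]; ring
  -- complex versions
  have hqC : (q : ℂ) ^ 2 = ((s : ℂ) - 1) / 24 := by exact_mod_cast congrArg Complex.ofReal hq
  have hbC : (b : ℂ) ^ 2 = ((s : ℂ) + 3) / 8 := by exact_mod_cast congrArg Complex.ofReal hb
  have hcC : (c : ℂ) = 4 * (q : ℂ) * (2 + (s : ℂ)) / 3 := by exact_mod_cast congrArg Complex.ofReal hc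
  have hsC : (s : ℂ) ^ 2 = 7 := by exact_mod_cast congrArg Complex.ofReal hs
  have hI : (Complex.I) ^ 2 = -1 := Complex.I_sq
  set L : ℝ := 4 * q ^ 3 * b - 4 * q * b ^ 3 + 2 * q * b + c * b with hL_def
  have hLC : (L : ℂ) = 4 * (q:ℂ) ^ 3 * (b:ℂ) - 4 * (q:ℂ) * (b:ℂ) ^ 3 + 2 * (q:ℂ) * (b:ℂ) + (c:ℂ) * (b:ℂ) := by
    rw [hL_def]; push_cast; ring
  refine ⟨-(q : ℂ) + (b : ℂ) * Complex.I, (L : ℂ) * Complex.I, ?_, ?_, ?_⟩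
  · simp
  · linear_combination (-((s:ℂ) - 1) / 24 - (q:ℂ) ^ 2 + 6 * (b:ℂ) ^ 2 - 1 - 4 * (2 + (s:ℂ)) / 3) * hqC
      + (((s:ℂ) - 1) / 4 - ((s:ℂ) + 3) / 8 - (b:ℂ) ^ 2 + 1) * hbC
      + (-(q:ℂ)) * hcC + (-Complex.I) * hLC
      + (-1 / 24 : ℂ) * hsC
      + (-6 * (q:ℂ) ^ 2 * (b:ℂ) ^ 2 + 4 * (q:ℂ) * (b:ℂ) ^ 3 * Complex.I
          - (b:ℂ) ^ 4 * (Complex.I ^ 2 - 1) - (b:ℂ) ^ 2) * hI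
  · linear_combination (4 * (q:ℂ) - 12 * (b:ℂ) * Complex.I) * hqC
      + (-12 * (q:ℂ) + 4 * (b:ℂ) * Complex.I) * hbC
      + hcC
      + (12 * (q:ℂ) * (b:ℂ) ^ 2 - 4 * (b:ℂ) ^ 3 * Complex.I) * hI
end
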